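/- arXiv:2402.15568 — 5 statements merged into one kernel-verified Lean document; each statement's English description precedes it below -/
import Mathlib

section
/- Cauchy–Binet expansion of twistor coordinates: let k, m, n be positive integers with k + m ≤ n, let C be a real k×n matrix, Z a real n×(k+m) matrix, and I = {i_1 < … < i_m} ⊆ {1,…,n} an m-element subset. Then ⟪I⟫_{C,Z} = Σ_J ε(J,I)·⟨J⟩_C·det(Z_{J∪I}), where the sum runs over all k-element subsets J ⊆ {1,…,n}∖I, det(Z_{J∪I}) denotes the (k+m)×(k+m) minor of Z on the rows indexed by J∪I taken in increasing order, and ε(J,I) is the sign of the permutation sorting into increasing order the list consisting of the elements of J in increasing order followed by the elements of I in increasing order. -/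
open Finset

/-- The `k × k` minor `⟨J⟩_C` of a `k × n` matrix `C` on the columns indexed by `J`,
taken in increasing order (junk value `0` if `J.card ≠ k`). -/
noncomputable def colMinor {k n : ℕ} (C : Matrix (Fin k) (Fin n) ℝ)
    (J : Finset (Fin n)) : ℝ :=
  if h : J.card = k then (C.submatrix id ⇑(J.orderEmbOfFin h)).det else 0

/-- The `p × p` minor of an `n × p` matrix `Z` on the rows indexed by `S`,
taken in increasing order (junk value `0` if `S.card ≠ p`). -/
noncomputable def rowMinor {n p : ℕ} (Z : Matrix (Fin n) (Fin p) ℝ)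
    (S : Finset (Fin n)) : ℝ :=
  if h : S.card = p then (Z.submatrix ⇑(S.orderEmbOfFin h) id).det else 0

/-- The twistor coordinate `⟪I⟫_{C,Z}`: the determinant of the `(k+m) × (k+m)` matrix
whose first `k` rows are the rows of `C * Z` and whose last `m` rows are the rows of `Z`
indexed by `I`, in increasing order (junk value `0` if `I.card ≠ m`). -/
noncomputable def twistor {k m n : ℕ} (C : Matrix (Fin k) (Fin n) ℝ)
    (Z : Matrix (Fin n) (Fin (k + m)) ℝ) (I : Finset (Fin n)) : ℝ :=
  if h : I.card = m then
    ((Matrix.fromRows (C * Z) (Z.submatrix ⇑(I.orderEmbOfFin h) id)).submatrix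
      ⇑finSumFinEquiv.symm id).det
  else 0

/-- `ε(J, I)`: the sign of the permutation sorting into increasing order the list
consisting of the elements of `J` in increasing order followed by the elements of `I`
in increasing order; it equals `(-1)` raised to the number of cross inversions, i.e.
pairs `(j, i) ∈ J × I` with `i < j`. -/
noncomputable def interleavingSign {n : ℕ} (J I : Finset (Fin n)) : ℝ :=
  (-1 : ℝ) ^ ((J ×ˢ I).filter fun p => p.2 < p.1).card

/-! Writing `A` for `C` with the unit rows `e_i` (`i ∈ I`) appended below it, the twistor matrix
is `A * Z`, so Cauchy–Binet gives `⟪I⟫ = ∑_S ⟨S⟩_A · det Z_S` over the `(k+m)`-subsets `S`.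
The minor `⟨S⟩_A` vanishes unless `I ⊆ S`. For `S = J ∪ I`, listing the columns as `J` followed
by `I` makes `A` block upper triangular with determinant `⟨J⟩_C`, and sorting that list costs
the sign `(-1)^(number of inversions) = ε(J, I)`.

Cauchy–Binet itself: expanding `det (A * B)` multilinearly in the columns gives a sum over maps
`f : Fin p → Fin n`; non-injective `f` contribute nothing, and an injective `f` is uniquely a
strictly monotone map (a `p`-subset) composed with a permutation. -/

open Matrix

theorem Equiv.Perm.sign_eq_neg_one_pow_card_inversions {N : ℕ} (σ : Equiv.Perm (Fin N)) :
    Equiv.Perm.sign σ = (-1) ^ #{p : Fin N × Fin N | p.1 < p.2 ∧ σ p.2 < σ p.1} := by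
  rw [σ.sign_eq_prod_prod_Iio, card_filter, ← prod_pow_eq_pow_sum, Fintype.prod_prod_type_right]
  refine prod_congr rfl fun j _ => ?_
  rw [← prod_subset (subset_univ (Iio j)) fun i _ hi => by simp_all]
  refine prod_congr rfl fun i hi => ?_
  have hij : i < j := mem_Iio.mp hi
  rcases lt_or_gt_of_ne (σ.injective.ne hij.ne) with h | h <;> simp [hij, h, h.not_gt]

theorem Tuple.sort_comp_perm_of_strictMono {α : Type*} [LinearOrder α] {p : ℕ} {e : Fin p → α}
    (he : StrictMono e) (σ : Equiv.Perm (Fin p)) : Tuple.sort (e ∘ σ) = σ⁻¹ := by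
  refine (Tuple.eq_sort_iff.mpr ⟨?_, fun i j hij h => ?_⟩).symm
  · simpa [Function.comp_def] using he.monotone
  · simp only [Function.comp_apply, Equiv.Perm.coe_inv, Equiv.apply_symm_apply] at h
    exact absurd (he.injective h) hij.ne

theorem Tuple.sign_sort_eq_neg_one_pow_card_inversions {α : Type*} [LinearOrder α] {N : ℕ}
    {v : Fin N → α} (hv : Function.Injective v) :
    Equiv.Perm.sign (Tuple.sort v) = (-1) ^ #{p : Fin N × Fin N | p.1 < p.2 ∧ v p.2 < v p.1} := by
  have hsorted : StrictMono (v ∘ Tuple.sort v) :=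
    (Tuple.monotone_sort v).strictMono_of_injective (hv.comp (Tuple.sort v).injective)
  have hlt (i j : Fin N) : (Tuple.sort v)⁻¹ i < (Tuple.sort v)⁻¹ j ↔ v i < v j := by
    rw [← hsorted.lt_iff_lt]; simp
  simp_rw [← Equiv.Perm.sign_inv (Tuple.sort v), Equiv.Perm.sign_eq_neg_one_pow_card_inversions,
    hlt]

theorem Fin.range_append {α : Type*} {m n : ℕ} (f : Fin m → α) (g : Fin n → α) :
    Set.range (Fin.append f g) = Set.range f ∪ Set.range g := by
  rw [← Set.Sum.elim_range, ← Fin.append_comp_sumElim, Set.range_comp,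
    show Set.range (Sum.elim (castAdd n) (natAdd m)) = Set.univ from finSumFinEquiv.range_eq_univ,
    Set.image_univ]

theorem Fin.card_inversions_append {α : Type*} [LinearOrder α] {k m : ℕ} {f : Fin k → α}
    {g : Fin m → α} (hf : StrictMono f) (hg : StrictMono g) :
    #{p : Fin (k + m) × Fin (k + m) | p.1 < p.2 ∧ append f g p.2 < append f g p.1} =
      #{q : Fin k × Fin m | g q.2 < f q.1} := by
  have hcross (a : Fin k) (b : Fin m) : castAdd m a < natAdd k b := by
    rw [lt_def, val_castAdd, val_natAdd]; omega
  symm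
  refine card_nbij (fun q => (castAdd m q.1, natAdd k q.2)) (fun q hq => ?_)
    (fun q _ q' _ h => by simp_all [Prod.ext_iff]) ?_
  · simp_all
  · rintro ⟨x, y⟩ hxy
    simp only [coe_filter, mem_univ, true_and, Set.mem_ofPred_eq] at hxy
    induction x using Fin.addCases with
    | left a => induction y using Fin.addCases with
      | left b =>
        simp only [append_left] at hxy
        exact absurd (hf (show a < b from hxy.1)) hxy.2.not_gt
      | right b => exact ⟨(a, b), by simpa using hxy.2⟩
    | right a => induction y using Fin.addCases with
      | left b => exact absurd hxy.1 (hcross b a).not_gt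
      | right b =>
        simp only [append_right, natAdd_lt_natAdd_iff] at hxy
        exact absurd (hg hxy.1) hxy.2.not_gt

open Classical in
theorem Finset.sum_injective_eq_sum_strictMono_sum_perm {α M : Type*} [Fintype α] [LinearOrder α]
    [AddCommMonoid M] {p : ℕ} (F : (Fin p → α) → M) :
    ∑ f with Function.Injective f, F f =
      ∑ e with StrictMono e, ∑ σ : Equiv.Perm (Fin p), F (e ∘ σ) := by
  rw [← sum_product']
  symm
  refine sum_nbij' (fun x => x.1 ∘ x.2) (fun f => (f ∘ Tuple.sort f, (Tuple.sort f)⁻¹))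
    ?_ ?_ ?_ (fun f _ => by ext; simp) fun _ _ => rfl
  · intro x hx
    simp only [mem_filter, mem_product, mem_univ, and_true, true_and] at hx ⊢
    exact hx.injective.comp x.2.injective
  · intro f hf
    simp only [mem_filter, mem_univ, true_and, mem_product, and_true] at hf ⊢
    exact (Tuple.monotone_sort f).strictMono_of_injective (hf.comp (Tuple.sort f).injective)
  · rintro ⟨e, σ⟩ he
    simp only [mem_product, mem_filter, mem_univ, true_and, and_true] at he
    simp [Tuple.sort_comp_perm_of_strictMono he, Function.comp_assoc]

open Classical in
theorem Finset.sum_powersetCard_eq_sum_strictMono {α M : Type*} [Fintype α] [LinearOrder α]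
    [AddCommMonoid M] (p : ℕ) (F : Finset α → M) :
    ∑ S ∈ univ.powersetCard p, F S = ∑ e : Fin p → α with StrictMono e, F (univ.image e) := by
  symm
  refine sum_nbij (fun e => univ.image e) (fun e he => ?_) (fun e he e' he' h => ?_)
    (fun S hS => ?_) fun _ _ => rfl
  · simp_all [card_image_of_injective _ (mem_filter.mp he).2.injective]
  · simp only [coe_filter, mem_univ, true_and, Set.mem_ofPred_eq] at he he'
    have hcard : (univ.image e).card = p := by simp [card_image_of_injective _ he.injective]
    rw [orderEmbOfFin_unique hcard (by simp) he, orderEmbOfFin_unique hcard (by simp [h]) he']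
  · have hcard := (mem_powersetCard.mp hS).2
    exact ⟨S.orderEmbOfFin hcard, by simpa using (S.orderEmbOfFin hcard).strictMono,
      image_orderEmbOfFin_univ S hcard⟩

theorem Finset.sum_powersetCard_eq_sum_powersetCard_compl_union {α M : Type*} [Fintype α]
    [DecidableEq α] [AddCommMonoid M] {k m : ℕ} {I : Finset α} (hI : I.card = m)
    {F : Finset α → M} (hF : ∀ S, ¬I ⊆ S → F S = 0) :
    ∑ S ∈ univ.powersetCard (k + m), F S = ∑ J ∈ Iᶜ.powersetCard k, F (J ∪ I) := by
  have hinj : Set.InjOn (· ∪ I) (Iᶜ.powersetCard k : Set (Finset α)) := by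
    intro J hJ J' hJ' h
    simp only [mem_coe, mem_powersetCard, subset_compl_iff_disjoint_right] at hJ hJ'
    rw [← union_sdiff_cancel_right hJ.1, ← union_sdiff_cancel_right hJ'.1]
    exact congrArg (· \ I) h
  rw [← sum_image hinj]
  refine (sum_subset (fun S hS => ?_) fun S hS hS' => hF S fun hIS => hS' ?_).symm
  · obtain ⟨J, hJ, rfl⟩ := mem_image.mp hS
    obtain ⟨hJI, hJ⟩ := mem_powersetCard.mp hJ
    rw [mem_powersetCard, card_union_of_disjoint (subset_compl_iff_disjoint_right.mp hJI), hJ, hI]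
    exact ⟨subset_univ _, rfl⟩
  · refine mem_image.mpr ⟨S \ I, mem_powersetCard.mpr ⟨fun x hx => ?_, ?_⟩,
      sdiff_union_of_subset hIS⟩
    · simpa using (mem_sdiff.mp hx).2
    · rw [card_sdiff_of_subset hIS, (mem_powersetCard.mp hS).2, hI, Nat.add_sub_cancel]

theorem Matrix.det_mul_eq_sum_prod_mul_det_submatrix {R m n : Type*} [CommRing R] [Fintype m]
    [DecidableEq m] [Fintype n] (A : Matrix m n R) (B : Matrix n m R) :
    (A * B).det = ∑ f : m → n, (∏ i, B (f i) i) * (A.submatrix id f).det :=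
  calc (A * B).det
      = ∑ σ : Equiv.Perm m, ((Equiv.Perm.sign σ : ℤ) : R) *
          ∑ f : m → n, ∏ i, A (σ i) (f i) * B (f i) i := by
        simp only [det_apply', mul_apply, prod_univ_sum, Fintype.piFinset_univ]
    _ = ∑ f : m → n, ∑ σ : Equiv.Perm m,
          ((Equiv.Perm.sign σ : ℤ) : R) * ∏ i, A (σ i) (f i) * B (f i) i := by
        simp only [mul_sum]; rw [sum_comm]
    _ = ∑ f : m → n, (∏ i, B (f i) i) * (A.submatrix id f).det := by
        refine sum_congr rfl fun f _ => ?_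
        simp only [det_apply', mul_sum, prod_mul_distrib, submatrix_apply, id_eq]
        exact sum_congr rfl fun σ _ => by ring

theorem Matrix.sum_perm_prod_mul_det_submatrix_comp {R m n : Type*} [CommRing R] [Fintype m]
    [DecidableEq m] (A : Matrix m n R) (B : Matrix n m R) (e : m → n) :
    ∑ σ : Equiv.Perm m, (∏ i, B (e (σ i)) i) * (A.submatrix id (e ∘ σ)).det =
      (A.submatrix id e).det * (B.submatrix e id).det := by
  have hperm (σ : Equiv.Perm m) :
      (A.submatrix id (e ∘ σ)).det = Equiv.Perm.sign σ * (A.submatrix id e).det := by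
    rw [← det_permute', submatrix_submatrix]; rfl
  simp only [hperm, det_apply' (B.submatrix e id), mul_sum, submatrix_apply, id_eq]
  exact sum_congr rfl fun σ _ => by ring

theorem colMinor_image_of_strictMono {k n : ℕ} (C : Matrix (Fin k) (Fin n) ℝ) {e : Fin k → Fin n}
    (he : StrictMono e) : colMinor C (univ.image e) = (C.submatrix id e).det := by
  have hcard : (univ.image e).card = k := by simp [card_image_of_injective _ he.injective]
  rw [colMinor, dif_pos hcard, ← orderEmbOfFin_unique hcard (by simp) he]

theorem rowMinor_image_of_strictMono {n p : ℕ} (Z : Matrix (Fin n) (Fin p) ℝ) {e : Fin p → Fin n}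
    (he : StrictMono e) : rowMinor Z (univ.image e) = (Z.submatrix e id).det := by
  have hcard : (univ.image e).card = p := by simp [card_image_of_injective _ he.injective]
  rw [rowMinor, dif_pos hcard, ← orderEmbOfFin_unique hcard (by simp) he]

open Classical in
theorem det_mul_eq_sum_colMinor_mul_rowMinor {p n : ℕ} (A : Matrix (Fin p) (Fin n) ℝ)
    (B : Matrix (Fin n) (Fin p) ℝ) :
    (A * B).det = ∑ S ∈ univ.powersetCard p, colMinor A S * rowMinor B S := by
  have hinj (f : Fin p → Fin n) (hf : (∏ i, B (f i) i) * (A.submatrix id f).det ≠ 0) :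
      Function.Injective f := by
    intro i j hij
    by_contra hne
    exact hf (by rw [det_zero_of_column_eq hne fun r => by simp [hij], mul_zero])
  rw [det_mul_eq_sum_prod_mul_det_submatrix, ← sum_filter_of_ne fun f _ => hinj f,
    sum_injective_eq_sum_strictMono_sum_perm, sum_powersetCard_eq_sum_strictMono]
  refine sum_congr rfl fun e he => ?_
  rw [colMinor_image_of_strictMono A (mem_filter.mp he).2,
    rowMinor_image_of_strictMono B (mem_filter.mp he).2]
  exact sum_perm_prod_mul_det_submatrix_comp A B e

theorem interleavingSign_eq_neg_one_pow {n k m : ℕ} {J I : Finset (Fin n)} (hJ : J.card = k)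
    (hI : I.card = m) :
    interleavingSign J I =
      (-1) ^ #{q : Fin k × Fin m | I.orderEmbOfFin hI q.2 < J.orderEmbOfFin hJ q.1} := by
  rw [interleavingSign]
  congr 1
  symm
  refine card_nbij (Prod.map (J.orderEmbOfFin hJ) (I.orderEmbOfFin hI)) (fun q hq => ?_)
    (fun q _ q' _ h => Prod.ext ((J.orderEmbOfFin hJ).injective (congrArg Prod.fst h))
      ((I.orderEmbOfFin hI).injective (congrArg Prod.snd h))) ?_
  · simp_all [orderEmbOfFin_mem]
  · rintro ⟨j, i⟩ hji
    simp only [coe_filter, mem_product, Set.mem_ofPred_eq] at hji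
    obtain ⟨a, rfl⟩ : j ∈ Set.range (J.orderEmbOfFin hJ) := by simpa using hji.1.1
    obtain ⟨b, rfl⟩ : i ∈ Set.range (I.orderEmbOfFin hI) := by simpa using hji.1.2
    exact ⟨(a, b), by simpa using hji.2, rfl⟩

noncomputable def appendUnitRows {R : Type*} [CommRing R] {k m n : ℕ}
    (C : Matrix (Fin k) (Fin n) R) (ι : Fin m → Fin n) : Matrix (Fin (k + m)) (Fin n) R :=
  (fromRows C ((1 : Matrix (Fin n) (Fin n) R).submatrix ι id)).submatrix finSumFinEquiv.symm id

theorem appendUnitRows_mul {R : Type*} [CommRing R] {k m n p : ℕ}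
    (C : Matrix (Fin k) (Fin n) R) (ι : Fin m → Fin n) (Z : Matrix (Fin n) (Fin p) R) :
    appendUnitRows C ι * Z =
      (fromRows (C * Z) (Z.submatrix ι id)).submatrix finSumFinEquiv.symm id := by
  have hunit : (1 : Matrix (Fin n) (Fin n) R).submatrix ι id * Z = Z.submatrix ι id := by
    simpa using one_submatrix_mul ι (Equiv.refl _) Z
  rw [appendUnitRows, ← Z.submatrix_id_id, ← submatrix_mul _ _ _ _ _ Function.bijective_id,
    fromRows_mul, Z.submatrix_id_id, hunit]

theorem colMinor_appendUnitRows_eq_zero {k m n : ℕ} (C : Matrix (Fin k) (Fin n) ℝ)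
    {ι : Fin m → Fin n} {S : Finset (Fin n)} {b : Fin m} (hb : ι b ∉ S) :
    colMinor (appendUnitRows C ι) S = 0 := by
  unfold colMinor
  split_ifs with hS
  · refine det_eq_zero_of_row_eq_zero (Fin.natAdd k b) fun j => ?_
    simp only [appendUnitRows, submatrix_apply, id_eq, finSumFinEquiv_symm_apply_natAdd,
      fromRows_apply_inr, one_apply]
    exact if_neg fun h : ι b = S.orderEmbOfFin hS j => hb (h ▸ orderEmbOfFin_mem S hS j)
  · rfl

theorem det_appendUnitRows_submatrix_append {R : Type*} [CommRing R] {k m n : ℕ}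
    (C : Matrix (Fin k) (Fin n) R) {f : Fin k → Fin n} {g : Fin m → Fin n}
    (hg : Function.Injective g) (hfg : ∀ a b, f a ≠ g b) :
    ((appendUnitRows C g).submatrix id (Fin.append f g)).det = (C.submatrix id f).det := by
  have hblock : (appendUnitRows C g).submatrix id (Fin.append f g) =
      (fromBlocks (C.submatrix id f) (C.submatrix id g) 0 1).submatrix
        finSumFinEquiv.symm finSumFinEquiv.symm := by
    ext i j
    induction i using Fin.addCases <;> induction j using Fin.addCases <;>
      simp [appendUnitRows, one_apply, hg.eq_iff, (hfg _ _).symm]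
  rw [hblock, det_submatrix_equiv_self, det_fromBlocks_zero₂₁, det_one, mul_one]

theorem colMinor_appendUnitRows_union {k m n : ℕ} (C : Matrix (Fin k) (Fin n) ℝ)
    {J I : Finset (Fin n)} (hJI : Disjoint J I) (hJ : J.card = k) (hI : I.card = m) :
    colMinor (appendUnitRows C (I.orderEmbOfFin hI)) (J ∪ I) =
      interleavingSign J I * colMinor C J := by
  have hJI' (a : Fin k) (b : Fin m) : J.orderEmbOfFin hJ a ≠ I.orderEmbOfFin hI b := fun h =>
    disjoint_left.mp hJI (orderEmbOfFin_mem J hJ a) (h ▸ orderEmbOfFin_mem I hI b)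
  set v := Fin.append (J.orderEmbOfFin hJ) (I.orderEmbOfFin hI) with hv_def
  have hv : Function.Injective v := Fin.append_injective_iff.mpr
    ⟨(J.orderEmbOfFin hJ).injective, (I.orderEmbOfFin hI).injective, hJI'⟩
  have hsorted : StrictMono (v ∘ Tuple.sort v) :=
    (Tuple.monotone_sort v).strictMono_of_injective (hv.comp (Tuple.sort v).injective)
  have himage : univ.image (v ∘ Tuple.sort v) = J ∪ I := by
    rw [← image_image, image_univ_equiv, ← coe_inj]
    simp [hv_def, Fin.range_append]
  calc colMinor (appendUnitRows C (I.orderEmbOfFin hI)) (J ∪ I)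
      = (((appendUnitRows C (I.orderEmbOfFin hI)).submatrix id v).submatrix id
          (Tuple.sort v)).det := by
        rw [← himage, colMinor_image_of_strictMono _ hsorted, submatrix_submatrix]; rfl
    _ = Equiv.Perm.sign (Tuple.sort v) * (C.submatrix id (J.orderEmbOfFin hJ)).det := by
        rw [det_permute', det_appendUnitRows_submatrix_append C (I.orderEmbOfFin hI).injective hJI']
    _ = interleavingSign J I * colMinor C J := by
        rw [Tuple.sign_sort_eq_neg_one_pow_card_inversions hv, Fin.card_inversions_append
          (J.orderEmbOfFin hJ).strictMono (I.orderEmbOfFin hI).strictMono,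
          interleavingSign_eq_neg_one_pow hJ hI, colMinor, dif_pos hJ]
        push_cast
        rfl

theorem cauchyBinet_twistor_general (k m n : ℕ)
    (C : Matrix (Fin k) (Fin n) ℝ) (Z : Matrix (Fin n) (Fin (k + m)) ℝ)
    (I : Finset (Fin n)) (hI : I.card = m) :
    twistor C Z I =
      ∑ J ∈ Iᶜ.powersetCard k,
        interleavingSign J I * colMinor C J * rowMinor Z (J ∪ I) := by
  have hvanish (S : Finset (Fin n)) (hS : ¬I ⊆ S) :
      colMinor (appendUnitRows C (I.orderEmbOfFin hI)) S * rowMinor Z S = 0 := by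
    obtain ⟨i, hiI, hiS⟩ := not_subset.mp hS
    obtain ⟨b, rfl⟩ : i ∈ Set.range (I.orderEmbOfFin hI) := by simpa using hiI
    rw [colMinor_appendUnitRows_eq_zero C hiS, zero_mul]
  rw [twistor, dif_pos hI, ← appendUnitRows_mul, det_mul_eq_sum_colMinor_mul_rowMinor,
    sum_powersetCard_eq_sum_powersetCard_compl_union hI hvanish]
  refine sum_congr rfl fun J hJ => ?_
  obtain ⟨hJI, hJ⟩ := mem_powersetCard.mp hJ
  rw [colMinor_appendUnitRows_union C (subset_compl_iff_disjoint_right.mp hJI) hJ hI]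

/-- Cauchy–Binet expansion of twistor coordinates. -/
theorem cauchyBinet_twistor (k m n : ℕ) (hk : 0 < k) (hm : 0 < m) (hn : k + m ≤ n)
    (C : Matrix (Fin k) (Fin n) ℝ) (Z : Matrix (Fin n) (Fin (k + m)) ℝ)
    (I : Finset (Fin n)) (hI : I.card = m) :
    twistor C Z I =
      ∑ J ∈ Iᶜ.powersetCard k,
        interleavingSign J I * colMinor C J * rowMinor Z (J ∪ I) :=
  cauchyBinet_twistor_general k m n C Z I hI
end

section
/- Nonvanishing twistor coordinates force coindependence: let k, m, n be positive integers with k + m ≤ n, let C be a real k×n matrix, Z a real n×(k+m) matrix, and I = {i_1 < … < i_m} ⊆ {1,…,n}. If the twistor coordinate ⟪I⟫_{C,Z} is nonzero, then I is coindependent for C, i.e. there exists a k-element subset J ⊆ {1,…,n}∖I with ⟨J⟩_C ≠ 0. -/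
open Finset

/-! If `⟪I⟫_{C,Z} ≠ 0`, the matrix with rows `C * Z` and `Z_I` is invertible. For a vector `v`
whose `v C` vanishes off `I`, `v (C Z) = (v C) Z = ∑_{i ∈ I} (v C)_i Z_i` is a linear relation
among the rows of that matrix, so `v = 0`. Hence the rows of `C` remain independent on the columns
outside `I`, these columns span `ℝ^k`, and a basis chosen among them is a `k`-set `J` disjoint
from `I` with `⟨J⟩_C ≠ 0`. -/

open scoped Matrix

namespace Matrix

theorem span_col_image_eq_top_of_forall_vecMul_eq_zero {K m ι : Type*} [Field K] [Fintype m]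
    (C : Matrix m ι K) {s : Set ι}
    (hC : ∀ v : m → K, (∀ j ∈ s, (v ᵥ* C) j = 0) → v = 0) :
    Submodule.span K (C.col '' s) = ⊤ := by
  classical
  by_contra hne
  obtain ⟨f, hf, hle⟩ := Submodule.exists_le_ker_of_lt_top _ (lt_top_iff_ne_top.2 hne)
  set v : m → K := fun i => f (Pi.single i 1)
  have hfv : ∀ x, f x = x ⬝ᵥ v := fun x => by
    conv_lhs => rw [pi_eq_sum_univ' x]
    simp [dotProduct, v]
  have hv : v = 0 := hC v fun j hj => by
    rw [vecMul, dotProduct_comm, ← hfv]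
    exact hle (Submodule.subset_span ⟨j, hj, rfl⟩)
  exact hf (LinearMap.ext fun x => by simp [hfv, hv])

theorem vecMul_eq_vecMul_submatrix_of_eq_zero_off_range {R ι κ ν : Type*}
    [NonUnitalNonAssocSemiring R] [Fintype ι] [Fintype κ] {e : ι → κ}
    (he : Function.Injective e) (M : Matrix κ ν R) {c : κ → R}
    (hc : ∀ j ∉ Set.range e, c j = 0) :
    c ᵥ* M = (c ∘ e) ᵥ* M.submatrix e id := by
  ext x
  exact (Fintype.sum_of_injective e he _ _ (fun j hj => by simp [hc j hj]) fun _ => rfl).symm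

end Matrix

theorem colMinor_ne_zero_of_linearIndepOn {k n : ℕ} {C : Matrix (Fin k) (Fin n) ℝ}
    {J : Finset (Fin n)} (hJ : J.card = k) (hC : LinearIndepOn ℝ C.col (J : Set (Fin n))) :
    colMinor C J ≠ 0 := by
  rw [colMinor, dif_pos hJ, ← isUnit_iff_ne_zero, ← Matrix.isUnit_iff_isUnit_det,
    ← Matrix.linearIndependent_cols_iff_isUnit]
  exact hC.comp (fun a => ⟨J.orderEmbOfFin hJ a, J.orderEmbOfFin_mem hJ a⟩)
    fun a b hab => (J.orderEmbOfFin hJ).injective (congrArg Subtype.val hab)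

theorem exists_colMinor_ne_zero_of_span_eq_top {k n : ℕ} (C : Matrix (Fin k) (Fin n) ℝ)
    {s : Set (Fin n)} (hC : Submodule.span ℝ (C.col '' s) = ⊤) :
    ∃ J : Finset (Fin n), J.card = k ∧ ↑J ⊆ s ∧ colMinor C J ≠ 0 := by
  classical
  obtain ⟨b, hbs, -, hspan, hli⟩ :=
    exists_linearIndepOn_extension (linearIndepOn_empty ℝ C.col) (Set.empty_subset s)
  set J := b.toFinset
  rw [← Set.coe_toFinset b] at hbs hspan hli
  have hJspan : Submodule.span ℝ (C.col '' J) = ⊤ :=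
    top_unique (hC ▸ Submodule.span_le.2 hspan)
  have hJcard : J.card = k := by
    have := finrank_span_eq_card hli
    rw [Set.image_eq_range] at hJspan
    rw [hJspan, finrank_top, Module.finrank_fin_fun] at this
    exact (Fintype.card_coe J).symm.trans this.symm
  exact ⟨J, hJcard, hbs, colMinor_ne_zero_of_linearIndepOn hJcard hli⟩

theorem eq_zero_of_twistor_ne_zero {k m n : ℕ} {C : Matrix (Fin k) (Fin n) ℝ}
    {Z : Matrix (Fin n) (Fin (k + m)) ℝ} {I : Finset (Fin n)} (hI : I.card = m)
    (h : twistor C Z I ≠ 0) {v : Fin k → ℝ} (hv : ∀ j ∉ I, (v ᵥ* C) j = 0) : v = 0 := by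
  rw [twistor, dif_pos hI] at h
  set e := I.orderEmbOfFin hI
  have hvC : v ᵥ* C ᵥ* Z = ((v ᵥ* C) ∘ e) ᵥ* Z.submatrix e id :=
    Matrix.vecMul_eq_vecMul_submatrix_of_eq_zero_off_range e.injective Z
      fun j hj => hv j (by rwa [I.range_orderEmbOfFin hI] at hj)
  have hw := Matrix.eq_zero_of_vecMul_eq_zero h
    (v := Sum.elim v (-((v ᵥ* C) ∘ e)) ∘ finSumFinEquiv.symm) <| by
    rw [Matrix.submatrix_vecMul_equiv, Equiv.symm_symm, Function.comp_assoc,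
      Equiv.symm_comp_self, Function.comp_id, Function.comp_id, Matrix.sumElim_vecMul_fromRows,
      ← Matrix.vecMul_vecMul, hvC, Matrix.neg_vecMul, add_neg_cancel]
  funext a
  simpa using congrFun hw (finSumFinEquiv (Sum.inl a))

theorem twistor_ne_zero_coindependent_general (k m n : ℕ) (C : Matrix (Fin k) (Fin n) ℝ)
    (Z : Matrix (Fin n) (Fin (k + m)) ℝ) (I : Finset (Fin n)) (hI : I.card = m)
    (h : twistor C Z I ≠ 0) :
    ∃ J : Finset (Fin n), J.card = k ∧ Disjoint J I ∧ colMinor C J ≠ 0 := by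
  have hspan : Submodule.span ℝ (C.col '' (↑I)ᶜ) = ⊤ :=
    Matrix.span_col_image_eq_top_of_forall_vecMul_eq_zero C fun _ hv =>
      eq_zero_of_twistor_ne_zero hI h hv
  obtain ⟨J, hJ, hJI, hJC⟩ := exists_colMinor_ne_zero_of_span_eq_top C hspan
  exact ⟨J, hJ, Finset.disjoint_left.2 fun j hj => hJI hj, hJC⟩

/-- A nonvanishing twistor coordinate `⟪I⟫_{C,Z}` forces `I` to be coindependent for `C`:
there is a `k`-element subset `J` of `{1, …, n} ∖ I` with `⟨J⟩_C ≠ 0`. -/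
theorem twistor_ne_zero_coindependent (k m n : ℕ) (hk : 0 < k) (hm : 0 < m)
    (hn : k + m ≤ n) (C : Matrix (Fin k) (Fin n) ℝ)
    (Z : Matrix (Fin n) (Fin (k + m)) ℝ) (I : Finset (Fin n)) (hI : I.card = m)
    (h : twistor C Z I ≠ 0) :
    ∃ J : Finset (Fin n), J.card = k ∧ Disjoint J I ∧ colMinor C J ≠ 0 :=
  twistor_ne_zero_coindependent_general k m n C Z I hI h
end

section
/- Row support forces vanishing of a twistor coordinate: let k, m, n be positive integers with k + m ≤ n, let C be a real k×n matrix, and let I ⊆ {1,…,n} with |I| = m. If some row of C has all of its nonzero entries in columns indexed by I (i.e. its support is contained in I), then ⟪I⟫_{C,Z} = 0 for every real n×(k+m) matrix Z. -/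
open Finset

/-! Since row `r` of `C` is supported on `I`, row `r` of `C * Z` is a linear combination of the
rows `Z_i`, `i ∈ I`, which are themselves rows of the twistor matrix; so its rows are linearly
dependent and its determinant vanishes. -/

namespace Matrix

variable {R ι κ μ n p : Type*}

theorem mul_row_eq_vecMul_submatrix [NonUnitalNonAssocSemiring R] [Fintype ι] [Fintype n]
    (C : Matrix κ n R) (Z : Matrix n p R) {e : ι → n} (he : Function.Injective e) {r : κ}
    (hsupp : ∀ j, C r j ≠ 0 → j ∈ Set.range e) :
    (C * Z) r = (fun i ↦ C r (e i)) ᵥ* Z.submatrix e id := by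
  ext
  refine (Fintype.sum_of_injective e he _ _ (fun j hj ↦ ?_) fun _ ↦ rfl).symm
  simp [not_imp_comm.mp (hsupp j) hj]

theorem det_submatrix_fromRows_eq_zero_of_row_eq_vecMul [Field R] [Fintype ι] [DecidableEq ι]
    [Fintype κ] [DecidableEq κ] [Fintype μ] (e : ι ≃ κ ⊕ μ) (A : Matrix κ ι R)
    (B : Matrix μ ι R) {r : κ} {c : μ → R} (h : A r = c ᵥ* B) :
    ((fromRows A B).submatrix e id).det = 0 := by
  let v : κ ⊕ μ → R := Sum.elim (Pi.single r 1) (-c)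
  have hv : v ≠ 0 := fun hv ↦ by simpa [v] using congrFun hv (.inl r)
  refine exists_vecMul_eq_zero_iff.mp ⟨v ∘ e, fun h0 ↦ hv ?_, ?_⟩
  · simpa [Function.comp_assoc] using congrArg (· ∘ e.symm) h0
  · rw [submatrix_vecMul_equiv, Function.comp_assoc, e.self_comp_symm, Function.comp_id,
      Function.comp_id, sumElim_vecMul_fromRows, single_vecMul, one_smul, neg_vecMul,
      ← sub_eq_add_neg, sub_eq_zero]
    exact h

end Matrix

theorem twistor_eq_zero_of_row_support_general (k m n : ℕ) (C : Matrix (Fin k) (Fin n) ℝ)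
    (I : Finset (Fin n)) (hI : I.card = m)
    (r : Fin k) (hsupp : ∀ j : Fin n, C r j ≠ 0 → j ∈ I) :
    ∀ Z : Matrix (Fin n) (Fin (k + m)) ℝ, twistor C Z I = 0 := by
  intro Z
  rw [twistor, dif_pos hI]
  refine Matrix.det_submatrix_fromRows_eq_zero_of_row_eq_vecMul _ _ _
    (Matrix.mul_row_eq_vecMul_submatrix C Z (I.orderEmbOfFin hI).injective (r := r) ?_)
  simpa [range_orderEmbOfFin] using hsupp

/-- If some row of `C` has its support contained in the column set `I`, then the
twistor coordinate `⟪I⟫_{C,Z}` vanishes for every `Z`. -/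
theorem twistor_eq_zero_of_row_support (k m n : ℕ) (hk : 0 < k) (hm : 0 < m)
    (hn : k + m ≤ n) (C : Matrix (Fin k) (Fin n) ℝ)
    (I : Finset (Fin n)) (hI : I.card = m)
    (r : Fin k) (hsupp : ∀ j : Fin n, C r j ≠ 0 → j ∈ I) :
    ∀ Z : Matrix (Fin n) (Fin (k + m)) ℝ, twistor C Z I = 0 :=
  twistor_eq_zero_of_row_support_general k m n C I hI r hsupp
end

section
/- The cyclic shift acts on Plücker coordinates by cyclic index shift and preserves total nonnegativity: let k ≤ n and let C be a real k×n matrix with columns v_1,…,v_n. Define cyc(C) to be the k×n matrix whose j-th column is v_{j+1} for 1 ≤ j ≤ n−1 and whose n-th column is (−1)^{k−1}·v_1. Then for every k-element subset I ⊆ {1,…,n}, ⟨I⟩_{cyc(C)} = ⟨σ(I)⟩_C, where σ(i) = i+1 for i < n and σ(n) = 1 (and σ(I) is taken in increasing order). In particular, if C is totally nonnegative (respectively, all ⟨J⟩_C > 0) then so is cyc(C). -/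
open Finset

/-- The cyclic shift of a `k × n` matrix: the `j`-th column of `cyc C` is the
`(j+1)`-st column of `C` for `j < n`, and the last column of `cyc C` is
`(-1)^(k-1)` times the first column of `C`.  (In `0`-based indexing, the `j`-th
column of `cyc C` is the column of `C` indexed by `finRotate n j = j + 1 (mod n)`,
with the sign `(-1)^(k-1)` appearing exactly on the last column.) -/
noncomputable def cyc {k n : ℕ} (C : Matrix (Fin k) (Fin n) ℝ) :
    Matrix (Fin k) (Fin n) ℝ :=
  Matrix.of fun i j =>
    (if (j : ℕ) + 1 = n then (-1 : ℝ) ^ (k - 1) else 1) * C i (finRotate n j)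

/-!
The columns of `cyc C` indexed by `I` are, up to the sign on the last column, the columns of `C`
indexed by `σ(I)`. If `n ∉ I` they already come in increasing order. If `n ∈ I`, the column `v_1`
stands last instead of first: the columns are permuted by a `k`-cycle, of sign `(-1)^(k-1)`,
which cancels the sign `(-1)^(k-1)` that `cyc` puts on that column.
-/

theorem Finset.orderEmbOfFin_image_apply_of_strictMonoOn {α β : Type*} [LinearOrder α]
    [LinearOrder β] {s : Finset α} {k : ℕ} (h : s.card = k) {g : α → β} (hg : StrictMonoOn g s)
    (h' : (s.image g).card = k) (i : Fin k) :
    (s.image g).orderEmbOfFin h' i = g (s.orderEmbOfFin h i) := by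
  refine congrFun (orderEmbOfFin_unique h' (fun j => mem_image_of_mem g (orderEmbOfFin_mem s h j))
    fun a b hab => ?_).symm i
  exact hg (orderEmbOfFin_mem s h a) (orderEmbOfFin_mem s h b) ((s.orderEmbOfFin h).strictMono hab)

theorem Finset.orderEmbOfFin_last_of_last_mem {n m : ℕ} {I : Finset (Fin (n + 1))}
    (hlast : Fin.last n ∈ I) (h : I.card = m + 1) :
    I.orderEmbOfFin h (Fin.last m) = Fin.last n := by
  have hmax : I.max' (card_pos.mp (h ▸ m.succ_pos)) = Fin.last n :=
    le_antisymm (Fin.le_last _) (le_max' _ _ hlast)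
  simpa [Fin.last, hmax] using orderEmbOfFin_last h m.succ_pos

theorem strictMonoOn_finRotate (n : ℕ) :
    StrictMonoOn (finRotate (n + 1)) {i | i ≠ Fin.last n} := by
  intro a ha b hb hab
  rw [Fin.lt_def, coe_finRotate_of_ne_last ha, coe_finRotate_of_ne_last hb]
  exact Nat.add_lt_add_right hab 1

theorem orderEmbOfFin_image_finRotate_of_last_notMem {n k : ℕ} {I : Finset (Fin (n + 1))}
    (hlast : Fin.last n ∉ I) (h : I.card = k) (h' : (I.image (finRotate (n + 1))).card = k)
    (j : Fin k) :
    (I.image (finRotate (n + 1))).orderEmbOfFin h' j = finRotate (n + 1) (I.orderEmbOfFin h j) :=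
  orderEmbOfFin_image_apply_of_strictMonoOn h
    ((strictMonoOn_finRotate n).mono fun _ hi => ne_of_mem_of_not_mem hi hlast) h' j

theorem orderEmbOfFin_image_finRotate_of_last_mem {n m : ℕ} {I : Finset (Fin (n + 1))}
    (hlast : Fin.last n ∈ I) (h : I.card = m + 1)
    (h' : (I.image (finRotate (n + 1))).card = m + 1) (j : Fin (m + 1)) :
    (I.image (finRotate (n + 1))).orderEmbOfFin h' (finRotate (m + 1) j) =
      finRotate (n + 1) (I.orderEmbOfFin h j) := by
  set e := I.orderEmbOfFin h
  let g i := finRotate (n + 1) (e ((finRotate (m + 1)).symm i))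
  have hg_zero : g 0 = 0 := by
    dsimp only [g]
    rw [(finRotate (m + 1)).symm_apply_eq.mpr finRotate_last.symm,
      orderEmbOfFin_last_of_last_mem hlast, finRotate_last]
  have hg_succ (i : Fin m) : (g i.succ : ℕ) = e i.castSucc + 1 := by
    have hne : e i.castSucc ≠ Fin.last n := by
      rw [← orderEmbOfFin_last_of_last_mem hlast h, e.injective.ne_iff]
      exact (Fin.castSucc_lt_last i).ne
    dsimp only [g]
    rw [(finRotate (m + 1)).symm_apply_eq.mpr (by rw [finRotate_apply, Fin.coeSucc_eq_succ]),
      coe_finRotate_of_ne_last hne]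
  have hg_inj : Function.Injective g :=
    (finRotate (n + 1)).injective.comp (e.injective.comp (finRotate (m + 1)).symm.injective)
  have hg_mono : StrictMono g := by
    intro a b hab
    cases a using Fin.cases with
    | zero =>
      rw [hg_zero, Fin.pos_iff_ne_zero, ← hg_zero]
      exact hg_inj.ne hab.ne'
    | succ a =>
      cases b using Fin.cases with
      | zero => exact absurd hab (Fin.not_lt_zero _)
      | succ b =>
        rw [Fin.lt_def, hg_succ, hg_succ]
        exact Nat.add_lt_add_right (e.strictMono (Fin.castSucc_lt_castSucc_iff.mpr
          (Fin.succ_lt_succ_iff.mp hab))) 1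
  rw [← orderEmbOfFin_unique h' (fun i => mem_image_of_mem _ (orderEmbOfFin_mem I h _)) hg_mono]
  dsimp only [g]
  rw [Equiv.symm_apply_apply]

theorem cyc_apply {k n : ℕ} (C : Matrix (Fin k) (Fin (n + 1)) ℝ) (i : Fin k) (j : Fin (n + 1)) :
    cyc C i j = (if j = Fin.last n then (-1 : ℝ) ^ (k - 1) else 1) * C i (finRotate (n + 1) j) := by
  simp [cyc, Fin.ext_iff]

theorem colMinor_cyc {k n : ℕ} (C : Matrix (Fin k) (Fin n) ℝ) {I : Finset (Fin n)}
    (hI : I.card = k) : colMinor (cyc C) I = colMinor C (I.image (finRotate n)) := by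
  rcases n with _ | n
  · rw [show cyc C = C from Matrix.ext fun _ j => j.elim0, Subsingleton.elim (I.image _) I]
  · have hI' : (I.image (finRotate (n + 1))).card = k :=
      (card_image_of_injective _ (finRotate _).injective).trans hI
    rw [colMinor, colMinor, dif_pos hI, dif_pos hI']
    by_cases hlast : Fin.last n ∈ I
    · obtain ⟨m, rfl⟩ : ∃ m, k = m + 1 :=
        Nat.exists_eq_add_one.mpr (hI ▸ card_pos.mpr ⟨_, hlast⟩)
      have hcols : (cyc C).submatrix id (I.orderEmbOfFin hI) =
          Matrix.of fun i j => (if j = Fin.last m then (-1 : ℝ) ^ m else 1) *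
            ((C.submatrix id ((I.image (finRotate (n + 1))).orderEmbOfFin hI')).submatrix id
              (finRotate (m + 1))) i j := by
        ext i j
        rw [Matrix.submatrix_apply, cyc_apply, Matrix.of_apply, Matrix.submatrix_apply,
          Matrix.submatrix_apply, orderEmbOfFin_image_finRotate_of_last_mem hlast hI hI']
        simp only [← orderEmbOfFin_last_of_last_mem hlast hI,
          (I.orderEmbOfFin hI).injective.eq_iff, Nat.add_sub_cancel, id]
      rw [hcols, Matrix.det_mul_row, prod_ite_eq' univ (Fin.last m), if_pos (mem_univ _),
        Matrix.det_permute', sign_finRotate, Nat.add_sub_cancel]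
      push_cast
      rw [← mul_assoc, ← pow_add, Even.neg_one_pow ⟨m, rfl⟩, one_mul]
    · congr 1
      ext i j
      rw [Matrix.submatrix_apply, Matrix.submatrix_apply, cyc_apply, id,
        orderEmbOfFin_image_finRotate_of_last_notMem hlast hI hI',
        if_neg (ne_of_mem_of_not_mem (orderEmbOfFin_mem I hI j) hlast), one_mul]

theorem cyc_plucker_general (k n : ℕ) (C : Matrix (Fin k) (Fin n) ℝ) :
    (∀ I : Finset (Fin n), I.card = k →
        colMinor (cyc C) I = colMinor C (I.image ⇑(finRotate n))) ∧
    ((∀ J : Finset (Fin n), J.card = k → 0 ≤ colMinor C J) →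
        ∀ J : Finset (Fin n), J.card = k → 0 ≤ colMinor (cyc C) J) ∧
    ((∀ J : Finset (Fin n), J.card = k → 0 < colMinor C J) →
        ∀ J : Finset (Fin n), J.card = k → 0 < colMinor (cyc C) J) := by
  have hcard (J : Finset (Fin n)) (hJ : J.card = k) : (J.image (finRotate n)).card = k :=
    (card_image_of_injective _ (finRotate n).injective).trans hJ
  refine ⟨fun I hI => colMinor_cyc C hI, fun hC J hJ => ?_, fun hC J hJ => ?_⟩
  · exact colMinor_cyc C hJ ▸ hC _ (hcard J hJ)
  · exact colMinor_cyc C hJ ▸ hC _ (hcard J hJ)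

/-- The cyclic shift acts on Plücker coordinates by the cyclic index shift
`σ = finRotate n` (`σ i = i + 1 (mod n)`), and hence preserves total nonnegativity
and total positivity of the maximal minors. -/
theorem cyc_plucker (k n : ℕ) (hkn : k ≤ n) (C : Matrix (Fin k) (Fin n) ℝ) :
    (∀ I : Finset (Fin n), I.card = k →
        colMinor (cyc C) I = colMinor C (I.image ⇑(finRotate n))) ∧
    ((∀ J : Finset (Fin n), J.card = k → 0 ≤ colMinor C J) →
        ∀ J : Finset (Fin n), J.card = k → 0 ≤ colMinor (cyc C) J) ∧
    ((∀ J : Finset (Fin n), J.card = k → 0 < colMinor C J) →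
        ∀ J : Finset (Fin n), J.card = k → 0 < colMinor (cyc C) J) :=
  cyc_plucker_general k n C
end

section
/- Every nonzero vector in the row span of a matrix in the spurion cell has support of size at least 6: if C ∈ S_sp ⊆ Mat_{2,9}(ℝ), then every nonzero real linear combination of the two rows of C has at least 6 nonzero coordinates. (Consequently, no point of S_sp admits a matrix representative with a row of support of size 5, which is the property characterizing the paper's BCFW cells; hence S_sp is not a BCFW cell.) -/
/-!
Vanishing of `c ᵥ* C` at two columns whose `2 × 2` minor is nonzero forces `c = 0`. In the
spurion cell every minor on columns from different blocks is positive, so a nonzero row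
combination can vanish only on columns of a single block, i.e. on at most `3` of the `9`
columns.
-/

open Finset

/-- The `2 × 2` minor `⟨{i,j}⟩_C` of a `2 × 9` matrix on columns `i` and `j`. -/
noncomputable def minor2 (C : Matrix (Fin 2) (Fin 9) ℝ) (i j : Fin 9) : ℝ :=
  C 0 i * C 1 j - C 0 j * C 1 i

/-- The spurion cell `S_sp ⊆ Mat_{2,9}(ℝ)`: the `2 × 2` minor on columns `i < j`
vanishes when `i` and `j` lie in the same block of `{1,2,3}, {4,5,6}, {7,8,9}`
(`0`-based: blocks of `⌊·/3⌋`), and is strictly positive when they lie in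
different blocks. -/
def SpurionCell (C : Matrix (Fin 2) (Fin 9) ℝ) : Prop :=
  ∀ i j : Fin 9, i < j →
    (((i : ℕ) / 3 = (j : ℕ) / 3 → minor2 C i j = 0) ∧
     ((i : ℕ) / 3 ≠ (j : ℕ) / 3 → 0 < minor2 C i j))

open Matrix

theorem Matrix.eq_zero_of_vecMul_apply_eq_zero {R n : Type*} [CommRing R] [NoZeroDivisors R]
    (C : Matrix (Fin 2) n R) {c : Fin 2 → R} {i j : n}
    (hdet : C 0 i * C 1 j - C 0 j * C 1 i ≠ 0) (hi : (c ᵥ* C) i = 0) (hj : (c ᵥ* C) j = 0) :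
    c = 0 := by
  refine eq_zero_of_vecMul_eq_zero (M := C.submatrix id ![i, j]) ?_ ?_
  · simpa [det_fin_two] using hdet
  · ext k
    fin_cases k
    · simpa [vecMul, dotProduct] using hi
    · simpa [vecMul, dotProduct] using hj

theorem Finset.card_le_of_forall_div_eq {n d : ℕ} (hd : 0 < d) {s : Finset (Fin n)}
    (hs : ∀ i ∈ s, ∀ j ∈ s, (i : ℕ) / d = (j : ℕ) / d) : s.card ≤ d := by
  calc s.card ≤ (range d).card := by
        refine card_le_card_of_injOn (fun k => (k : ℕ) % d) (fun k _ => ?_) fun i hi j hj hij => ?_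
        · simpa using Nat.mod_lt _ hd
        · rw [Fin.ext_iff, ← Nat.div_add_mod i d, ← Nat.div_add_mod j d, hs i hi j hj]
          simp only at hij
          rw [hij]
    _ = d := card_range d

theorem minor2_swap (C : Matrix (Fin 2) (Fin 9) ℝ) (i j : Fin 9) :
    minor2 C j i = -minor2 C i j := by
  unfold minor2; ring

theorem SpurionCell.minor2_ne_zero {C : Matrix (Fin 2) (Fin 9) ℝ} (hC : SpurionCell C)
    {i j : Fin 9} (hij : (i : ℕ) / 3 ≠ (j : ℕ) / 3) : minor2 C i j ≠ 0 := by
  rcases lt_trichotomy i j with hlt | rfl | hgt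
  · exact ((hC i j hlt).2 hij).ne'
  · exact absurd rfl hij
  · rw [minor2_swap, neg_ne_zero]
    exact ((hC j i hgt).2 (Ne.symm hij)).ne'

theorem SpurionCell.div_three_eq_of_vecMul_eq_zero {C : Matrix (Fin 2) (Fin 9) ℝ}
    (hC : SpurionCell C) {c : Fin 2 → ℝ} (hc : c ≠ 0) {i j : Fin 9}
    (hi : (c ᵥ* C) i = 0) (hj : (c ᵥ* C) j = 0) : (i : ℕ) / 3 = (j : ℕ) / 3 := by
  by_contra hij
  exact hc (C.eq_zero_of_vecMul_apply_eq_zero (hC.minor2_ne_zero hij) hi hj)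

/-- Every nonzero vector in the row span of a matrix in the spurion cell has
support of size at least `6`. -/
theorem spurion_row_support (C : Matrix (Fin 2) (Fin 9) ℝ) (hC : SpurionCell C)
    (c : Fin 2 → ℝ) (h : Matrix.vecMul c C ≠ 0) :
    6 ≤ (Finset.univ.filter fun j => Matrix.vecMul c C j ≠ 0).card := by
  have hc : c ≠ 0 := by
    rintro rfl
    exact h (zero_vecMul C)
  have hzeros : (univ.filter fun j => (c ᵥ* C) j = 0).card ≤ 3 :=
    card_le_of_forall_div_eq three_pos fun i hi j hj =>
      hC.div_three_eq_of_vecMul_eq_zero hc (mem_filter.1 hi).2 (mem_filter.1 hj).2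
  have hsplit := card_filter_add_card_filter_not (s := univ) fun j => (c ᵥ* C) j = 0
  simp only [← ne_eq, card_univ, Fintype.card_fin] at hsplit
  omega
end
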